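/- PMEPR bound for complementary sets: if {e^0,...,e^{M-1}} is a complementary set of M unimodular sequences of length N, then for each l and every real θ, |sum_{k=0}^{N-1} e^l_k e^{i k θ}|^2 ≤ MN; hence each member sequence has PMEPR at most M. -/

import Mathlib

open Finset Complex

/-- Extension of a length-`N` sequence to `ℤ` by zero outside `[0, N)`. -/
noncomputable def extSeq (N : ℕ) (d : ℕ → ℂ) : ℤ → ℂ :=
  fun i => if 0 ≤ i ∧ i < (N : ℤ) then d i.toNat else 0

/-- Aperiodic cross-correlation of length-`N` complex sequences at integer shift `s`. -/
noncomputable def acorr (N : ℕ) (d e : ℕ → ℂ) (s : ℤ) : ℂ :=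
  ∑ k ∈ Finset.range N, extSeq N d k * (starRingEnd ℂ) (extSeq N e (k + s))

/-- Aperiodic autocorrelation. -/
noncomputable def aauto (N : ℕ) (e : ℕ → ℂ) (s : ℤ) : ℂ := acorr N e e s

/-- Golay complementary pair of length `N`. -/
def IsGCP (N : ℕ) (a b : ℕ → ℂ) : Prop :=
  ∀ s : ℤ, s ≠ 0 → aauto N a s + aauto N b s = 0

open ComplexConjugate

/-!
The instantaneous power of a sequence is the Fourier transform of its aperiodic
autocorrelation, `|S_e(θ)|² = ∑ₛ A_e(s) e^{-isθ}`. Summing over a complementary set, all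
shifts `s ≠ 0` cancel and only `∑ₗ A_{e^l}(0) = MN` remains, so a single `|S_{e^l}(θ)|²`,
being one of `M` nonnegative summands, is at most `MN`.
-/

noncomputable def signal (N : ℕ) (e : ℕ → ℂ) (θ : ℝ) : ℂ :=
  ∑ k ∈ range N, e k * exp (I * k * θ)

section extSeq

variable {N : ℕ} {d : ℕ → ℂ}

lemma extSeq_natCast {k : ℕ} (hk : k < N) : extSeq N d k = d k := by
  simp [extSeq, hk]

lemma extSeq_eq_zero {i : ℤ} (hi : ¬(0 ≤ i ∧ i < N)) : extSeq N d i = 0 :=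
  if_neg hi

end extSeq

lemma sum_range_eq_sum_Icc_add {β : Type*} [AddCommMonoid β] {N k : ℕ} (hk : k < N)
    {g : ℤ → β} (hg : ∀ i : ℤ, ¬(0 ≤ i ∧ i < N) → g i = 0) :
    ∑ j ∈ range N, g j = ∑ s ∈ Icc (-N : ℤ) N, g (k + s) := by
  refine sum_of_injOn (fun j : ℕ ↦ (j : ℤ) - k) ?_ ?_ ?_ ?_
  · intro a _ b _ hab
    simp only at hab
    omega
  · intro j hj
    simp only [coe_range, Set.mem_Iio] at hj
    simp only [coe_Icc, Set.mem_Icc]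
    omega
  · intro s _ hs
    refine hg (k + s) fun hks ↦ hs ⟨(k + s).toNat, ?_, ?_⟩
    · simp only [coe_range, Set.mem_Iio]
      omega
    · simp only
      omega
  · intro j _
    simp

lemma normSq_signal (N : ℕ) (e : ℕ → ℂ) (θ : ℝ) :
    (normSq (signal N e θ) : ℂ) = ∑ s ∈ Icc (-N : ℤ) N, aauto N e s * exp (-(I * s * θ)) := by
  have hconj : conj (signal N e θ) = ∑ j ∈ range N, conj (e j) * exp (-(I * j * θ)) := by
    simp only [signal, map_sum, map_mul, ← exp_conj, conj_I, conj_ofReal, map_natCast,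
      neg_mul]
  rw [← mul_conj, hconj, signal, sum_mul_sum]
  calc ∑ k ∈ range N, ∑ j ∈ range N, e k * exp (I * k * θ) * (conj (e j) * exp (-(I * j * θ)))
      = ∑ k ∈ range N, ∑ s ∈ Icc (-N : ℤ) N,
          extSeq N e k * conj (extSeq N e (k + s)) * exp (-(I * s * θ)) := by
        refine sum_congr rfl fun k hk ↦ ?_
        rw [mem_range] at hk
        set G : ℤ → ℂ := fun i ↦ extSeq N e k * conj (extSeq N e i) * exp (I * k * θ - I * i * θ)
        have hG : ∀ i : ℤ, ¬(0 ≤ i ∧ i < N) → G i = 0 := fun i hi ↦ by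
          simp [G, extSeq_eq_zero hi]
        calc _ = ∑ j ∈ range N, G j := sum_congr rfl fun j hj ↦ by
                simp only [G, extSeq_natCast hk, Int.cast_natCast,
                  extSeq_natCast (mem_range.mp hj), sub_eq_add_neg, exp_add]
                ring
          _ = _ := by
                rw [sum_range_eq_sum_Icc_add hk hG]
                refine sum_congr rfl fun s _ ↦ ?_
                simp only [G]
                congr 2
                push_cast
                ring
    _ = _ := by
        rw [sum_comm]
        simp only [aauto, acorr, sum_mul]

lemma aauto_zero_of_norm_eq_one {N : ℕ} {e : ℕ → ℂ} (huni : ∀ k < N, ‖e k‖ = 1) :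
    aauto N e 0 = N := by
  have hterm : ∀ k ∈ range N, extSeq N e k * conj (extSeq N e (k + 0)) = 1 := fun k hk ↦ by
    rw [add_zero, extSeq_natCast (mem_range.mp hk), mul_conj, normSq_eq_norm_sq,
      huni k (mem_range.mp hk)]
    norm_num
  rw [aauto, acorr, sum_congr rfl hterm]
  simp

lemma sum_normSq_signal_of_complementary {ι : Type*} [Fintype ι] (N : ℕ) (e : ι → ℕ → ℂ)
    (hcs : ∀ s : ℤ, s ≠ 0 → ∑ l, aauto N (e l) s = 0) (θ : ℝ) :
    ∑ l, (normSq (signal N (e l) θ) : ℂ) = ∑ l, aauto N (e l) 0 := by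
  simp only [normSq_signal]
  rw [sum_comm, sum_eq_single_of_mem 0 (by simp)]
  · simp
  · intro s _ hs
    rw [← sum_mul, hcs s hs, zero_mul]

/-- PMEPR bound for complementary sets: each member of a complementary
set of `M` unimodular length-`N` sequences satisfies `|S(θ)|² ≤ MN`. -/
theorem cs_pmepr_le_M (M N : ℕ) (e : Fin M → ℕ → ℂ)
    (huni : ∀ l, ∀ k < N, ‖e l k‖ = 1)
    (hcs : ∀ s : ℤ, s ≠ 0 → ∑ l : Fin M, aauto N (e l) s = 0)
    (l : Fin M) (θ : ℝ) :
    ‖∑ k ∈ Finset.range N,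
        e l k * Complex.exp (Complex.I * k * θ)‖ ^ 2 ≤ M * N := by
  have htotal : ∑ m, normSq (signal N (e m) θ) = M * N := by
    have h := sum_normSq_signal_of_complementary N e hcs θ
    simp only [aauto_zero_of_norm_eq_one (huni _), sum_const, card_univ, Fintype.card_fin,
      nsmul_eq_mul] at h
    exact_mod_cast h
  calc ‖signal N (e l) θ‖ ^ 2 = normSq (signal N (e l) θ) := (normSq_eq_norm_sq _).symm
    _ ≤ ∑ m, normSq (signal N (e m) θ) :=
      single_le_sum (f := fun m ↦ normSq (signal N (e m) θ)) (fun m _ ↦ normSq_nonneg _)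
        (mem_univ l)
    _ = M * N := htotal
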